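/- Let A be a real symmetric N×N matrix whose comparison matrix A‡ is positive definite. Then for every eigenpair Av = κv with κ > 0 and v ≠ 0, and w solving A‡ w = 𝟙, one has |v_i|/‖v‖_∞ ≤ κ w_i for each i. -/

import Mathlib

open Matrix

/-- The comparison matrix `A‡`: diagonal entries `|A i i|`, off-diagonal entries `-|A i j|`. -/
def compMat {N : ℕ} (A : Matrix (Fin N) (Fin N) ℝ) : Matrix (Fin N) (Fin N) ℝ :=
  fun i j => if i = j then |A i i| else -|A i j|

/-!
The triangle inequality applied to row `k` of `A v = κ v` gives `A‡ |v| ≤ κ |v|` entrywise, so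
`x = κ ‖v‖ w - |v|` satisfies `A‡ x ≥ κ ‖v‖ 𝟙 - κ |v| ≥ 0`. A positive definite matrix with
nonpositive off-diagonal entries is monotone (`B x ≥ 0 → x ≥ 0`), hence `|v| ≤ κ ‖v‖ w`.
-/

namespace Matrix

variable {n : Type*} [Fintype n] {B : Matrix n n ℝ}

lemma dotProduct_mulVec_nonpos_of_disjoint (hoff : ∀ i j, i ≠ j → B i j ≤ 0)
    {x y : n → ℝ} (hx : 0 ≤ x) (hy : 0 ≤ y) (hxy : ∀ i, x i = 0 ∨ y i = 0) :
    x ⬝ᵥ B *ᵥ y ≤ 0 := by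
  refine Finset.sum_nonpos fun i _ => ?_
  rw [mulVec, dotProduct, Finset.mul_sum]
  refine Finset.sum_nonpos fun j _ => ?_
  obtain rfl | hij := eq_or_ne i j
  · rcases hxy i with h | h <;> simp [h]
  · exact mul_nonpos_of_nonneg_of_nonpos (hx i)
      (mul_nonpos_of_nonpos_of_nonneg (hoff i j hij) (hy j))

/-- If `x` had a nonzero negative part `x⁻`, then `⟪x⁻, B x⟫ = ⟪x⁻, B x⁺⟫ - ⟪x⁻, B x⁻⟫ < 0`,
since the cross term only involves off-diagonal entries. -/
lemma PosDef.nonneg_of_nonneg_mulVec (hB : B.PosDef) (hoff : ∀ i j, i ≠ j → B i j ≤ 0)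
    {x : n → ℝ} (hx : 0 ≤ B *ᵥ x) : 0 ≤ x := by
  suffices hneg : x⁻ = 0 by simpa [← negPart_eq_zero] using hneg
  by_contra hne
  have hdisj : ∀ i, x⁻ i = 0 ∨ x⁺ i = 0 := fun i => by
    rcases le_total 0 (x i) with h | h
    · exact Or.inl (by simpa using h)
    · exact Or.inr (by simpa using h)
  have hpos : 0 < x⁻ ⬝ᵥ B *ᵥ x⁻ := by simpa using hB.dotProduct_mulVec_pos hne
  have hcross : x⁻ ⬝ᵥ B *ᵥ x⁺ ≤ 0 :=
    dotProduct_mulVec_nonpos_of_disjoint hoff (negPart_nonneg x) (posPart_nonneg x) hdisj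
  have hsplit : x⁻ ⬝ᵥ B *ᵥ x = x⁻ ⬝ᵥ B *ᵥ x⁺ - x⁻ ⬝ᵥ B *ᵥ x⁻ := by
    rw [← dotProduct_sub, ← mulVec_sub, posPart_sub_negPart]
  have hnonneg : 0 ≤ x⁻ ⬝ᵥ B *ᵥ x := dotProduct_nonneg_of_nonneg (negPart_nonneg x) hx
  linarith

end Matrix

lemma compMat_offDiag_nonpos {N : ℕ} (A : Matrix (Fin N) (Fin N) ℝ) (i j : Fin N) (hij : i ≠ j) :
    compMat A i j ≤ 0 := by
  simp [compMat, hij]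

lemma compMat_mulVec_apply {N : ℕ} (A : Matrix (Fin N) (Fin N) ℝ) (y : Fin N → ℝ) (k : Fin N) :
    (compMat A *ᵥ y) k = |A k k| * y k - ∑ j ∈ {k}ᶜ, |A k j| * y j := by
  have hoff : ∀ j ∈ ({k}ᶜ : Finset (Fin N)), compMat A k j * y j = -(|A k j| * y j) := by
    intro j hj
    have hkj : k ≠ j := by simpa [eq_comm] using hj
    simp [compMat, hkj]
  rw [mulVec, dotProduct, Fintype.sum_eq_add_sum_compl k, Finset.sum_congr rfl hoff,
    Finset.sum_neg_distrib, compMat, if_pos rfl, sub_eq_add_neg]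

lemma compMat_mulVec_abs_le {N : ℕ} (A : Matrix (Fin N) (Fin N) ℝ) (v : Fin N → ℝ) (k : Fin N) :
    (compMat A *ᵥ |v|) k ≤ |(A *ᵥ v) k| := by
  have hAv : (A *ᵥ v) k = A k k * v k + ∑ j ∈ {k}ᶜ, A k j * v j := by
    rw [mulVec, dotProduct, Fintype.sum_eq_add_sum_compl k]
  calc (compMat A *ᵥ |v|) k = |A k k * v k| - ∑ j ∈ {k}ᶜ, |A k j * v j| := by
        simp only [compMat_mulVec_apply, Pi.abs_apply, abs_mul]
    _ ≤ |A k k * v k| - |∑ j ∈ {k}ᶜ, A k j * v j| := by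
        gcongr; exact Finset.abs_sum_le_sum_abs _ _
    _ ≤ |(A *ᵥ v) k| := hAv ▸ abs_sub_abs_le_abs_add _ _

theorem stmt_19_general {N : ℕ} (A : Matrix (Fin N) (Fin N) ℝ)
    (hpd : (compMat A).PosDef)
    (κ : ℝ) (hκ : 0 < κ) (v : Fin N → ℝ) (hv : v ≠ 0)
    (heig : A *ᵥ v = κ • v)
    (w : Fin N → ℝ) (hw : compMat A *ᵥ w = 1) (i : Fin N) :
    |v i| / ‖v‖ ≤ κ * w i := by
  have hsuper : 0 ≤ compMat A *ᵥ ((κ * ‖v‖) • w - |v|) := fun k => by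
    have hvk : |v k| ≤ ‖v‖ := norm_le_pi_norm v k
    have hland : (compMat A *ᵥ |v|) k ≤ κ * |v k| := by
      simpa [heig, abs_mul, abs_of_pos hκ] using compMat_mulVec_abs_le A v k
    simp only [mulVec_sub, mulVec_smul, hw, Pi.sub_apply, Pi.smul_apply, Pi.one_apply,
      smul_eq_mul, mul_one, Pi.zero_apply]
    nlinarith
  have hi := hpd.nonneg_of_nonneg_mulVec (compMat_offDiag_nonpos A) hsuper i
  simp only [Pi.zero_apply, Pi.sub_apply, Pi.smul_apply, smul_eq_mul, Pi.abs_apply] at hi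
  rw [div_le_iff₀ (norm_pos_iff.mpr hv)]
  linarith

theorem stmt_19 {N : ℕ} (A : Matrix (Fin N) (Fin N) ℝ) (hsym : A.IsSymm)
    (hpd : (compMat A).PosDef)
    (κ : ℝ) (hκ : 0 < κ) (v : Fin N → ℝ) (hv : v ≠ 0)
    (heig : A *ᵥ v = κ • v)
    (w : Fin N → ℝ) (hw : compMat A *ᵥ w = 1) (i : Fin N) :
    |v i| / ‖v‖ ≤ κ * w i :=
  stmt_19_general A hpd κ hκ v hv heig w hw i
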